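/- arXiv:1906.11974 — 3 statements merged into one kernel-verified Lean document; each statement's English description precedes it below -/
import Mathlib

section
/- For 2^(1/4) ≤ s < √2, the two intervals I₁(s) = [T_s²(1/2), T_s⁴(1/2)] and I₂(s) = [T_s³(1/2), T_s(1/2)] are disjoint, and the Hausdorff distance between I₁(s) ∪ I₂(s) and I₀(√2) = [√2(1 − √2/2), √2/2] tends to 0 as s → √2 from below. -/
open Set Metric

/-- The tent map. -/
noncomputable def tent (s x : ℝ) : ℝ := if x ≤ 1/2 then s * x else s * (1 - x)

lemma tent_iters (s : ℝ) (h1 : 1 < s) (h2 : s*s < 2) :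
    tent s (1/2) = s/2 ∧
    (tent s)^[2] (1/2) = s - s^2/2 ∧
    (tent s)^[3] (1/2) = s^2 - s^3/2 ∧
    (tent s)^[4] (1/2) = s - s^3 + s^4/2 := by
  have e1 : tent s (1/2) = s/2 := by
    rw [tent, if_pos le_rfl]; ring
  have e2 : tent s (s/2) = s - s^2/2 := by
    rw [tent, if_neg (by linarith)]; ring
  have e3 : tent s (s - s^2/2) = s^2 - s^3/2 := by
    rw [tent, if_pos (by nlinarith [sq_nonneg (s-1)])]; ring
  have e4 : tent s (s^2 - s^3/2) = s - s^3 + s^4/2 := by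
    rw [tent, if_neg (by nlinarith [mul_pos (sub_pos.mpr h1) (by nlinarith : (0:ℝ) < 1 + s - s^2)])]
    ring
  refine ⟨e1, ?_, ?_, ?_⟩
  · rw [show ((tent s)^[2] (1/2) = tent s (tent s (1/2))) from rfl, e1, e2]
  · rw [show ((tent s)^[3] (1/2) = tent s (tent s (tent s (1/2)))) from rfl, e1, e2, e3]
  · rw [show ((tent s)^[4] (1/2) = tent s (tent s (tent s (tent s (1/2))))) from rfl,
      e1, e2, e3, e4]

lemma poly_a1_le_b1 (s : ℝ) : s - s^2/2 ≤ s - s^3 + s^4/2 := by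
  nlinarith [mul_nonneg (sq_nonneg s) (sq_nonneg (s-1))]

lemma poly_a2_le_b2 (s : ℝ) (h1 : 1 < s) : s^2 - s^3/2 ≤ s/2 := by
  nlinarith [mul_nonneg (by linarith : (0:ℝ) ≤ s) (sq_nonneg (s-1))]

lemma poly_b1_lt_a2 (s : ℝ) (h1 : 1 < s) (h2 : s*s < 2) :
    s - s^3 + s^4/2 < s^2 - s^3/2 := by
  nlinarith [mul_pos (mul_pos (by linarith : (0:ℝ) < s) (by linarith : (0:ℝ) < s - 1))
    (by nlinarith : (0:ℝ) < 2 - s^2)]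

lemma poly_a2_gt_half (s : ℝ) (h1 : 1 < s) (h2 : s*s < 2) : 1/2 < s^2 - s^3/2 := by
  nlinarith [mul_pos (sub_pos.mpr h1) (by nlinarith : (0:ℝ) < 1 + s - s^2)]

lemma sqrt_two_facts : Real.sqrt 2 * Real.sqrt 2 = 2 ∧ 1 < Real.sqrt 2 ∧ Real.sqrt 2 < 3/2 := by
  have ht2 : Real.sqrt 2 * Real.sqrt 2 = 2 := Real.mul_self_sqrt (by norm_num)
  exact ⟨ht2, by nlinarith [Real.sqrt_nonneg 2], by nlinarith [Real.sqrt_nonneg 2]⟩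

set_option maxHeartbeats 1000000 in
lemma tent_hd_key (s : ℝ) (h1 : 1 < s) (hst : s < Real.sqrt 2) :
    hausdorffDist
      (Icc ((tent s)^[2] (1/2)) ((tent s)^[4] (1/2)) ∪
       Icc ((tent s)^[3] (1/2)) (tent s (1/2)))
      (Icc (Real.sqrt 2 - 1) (Real.sqrt 2 / 2)) ≤ 2 * (Real.sqrt 2 - s) := by
  obtain ⟨ht2, ht1, ht32⟩ := sqrt_two_facts
  have hss : s * s < 2 := ht2 ▸ mul_self_lt_mul_self (by linarith) hst
  obtain ⟨e1, e2, e3, e4⟩ := tent_iters s h1 hss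
  rw [e1, e2, e3, e4]
  have hts : (0:ℝ) ≤ Real.sqrt 2 - s := by linarith
  -- endpoint facts
  have hAa1 : Real.sqrt 2 - 1 ≤ s - s^2/2 := by
    nlinarith [mul_nonneg hts (by linarith : (0:ℝ) ≤ s + Real.sqrt 2 - 2)]
  have ha1b1 : s - s^2/2 ≤ s - s^3 + s^4/2 := poly_a1_le_b1 s
  have ha2b2 : s^2 - s^3/2 ≤ s/2 := poly_a2_le_b2 s h1
  have hb1a2 : s - s^3 + s^4/2 ≤ s^2 - s^3/2 := (poly_b1_lt_a2 s h1 hss).le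
  have hb2B : s/2 ≤ Real.sqrt 2 / 2 := by linarith
  have hb1B : s - s^3 + s^4/2 ≤ Real.sqrt 2 / 2 := by linarith
  have ha2A : Real.sqrt 2 - 1 ≤ s^2 - s^3/2 := by
    linarith [poly_a2_gt_half s h1 hss]
  have hgap : (s^2 - s^3/2) - (s - s^3 + s^4/2) ≤ 2 * (Real.sqrt 2 - s) := by
    have hexp : (s^2 - s^3/2) - (s - s^3 + s^4/2)
        = (Real.sqrt 2 - s) * (s*(s-1)*(Real.sqrt 2 + s)) / 2 := by
      linear_combination (-(s*(s-1))/2) * ht2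
    rw [hexp]
    have hfac : s*(s-1)*(Real.sqrt 2 + s) ≤ 4 := by nlinarith
    nlinarith [mul_nonneg hts
      (by nlinarith : (0:ℝ) ≤ 4 - s*(s-1)*(Real.sqrt 2 + s))]
  apply hausdorffDist_le_of_mem_dist (by linarith)
  · intro x hx
    refine ⟨x, ?_, by rw [dist_self]; linarith⟩
    rcases hx with hx | hx
    · exact ⟨by linarith [hx.1], by linarith [hx.2]⟩
    · exact ⟨by linarith [hx.1], by linarith [hx.2]⟩
  · intro y hy
    rcases le_or_gt y (s - s^3 + s^4/2) with hyb1 | hyb1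
    · refine ⟨max (s - s^2/2) y, Or.inl ⟨le_max_left _ _, max_le ha1b1 hyb1⟩, ?_⟩
      rcases le_total (s - s^2/2) y with h | h
      · rw [max_eq_right h, dist_self]; linarith
      · rw [max_eq_left h, Real.dist_eq, abs_of_nonpos (by linarith)]
        have h6 : (0:ℝ) ≤ (Real.sqrt 2 - s) * (6 - s - Real.sqrt 2) :=
          mul_nonneg hts (by linarith)
        have hy1 := hy.1
        nlinarith
    · rcases lt_or_ge y (s^2 - s^3/2) with hya2 | hya2
      · refine ⟨s^2 - s^3/2, Or.inr ⟨le_rfl, ha2b2⟩, ?_⟩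
        rw [Real.dist_eq, abs_of_nonpos (by linarith)]
        linarith
      · refine ⟨min (s/2) y, Or.inr ⟨le_min ha2b2 hya2, min_le_left _ _⟩, ?_⟩
        rcases le_total y (s/2) with h | h
        · rw [min_eq_right h, dist_self]; linarith
        · rw [min_eq_left h, Real.dist_eq, abs_of_nonneg (by linarith)]
          have := hy.2
          linarith

theorem tent_two_band_disjoint_and_hausdorff_limit :
    (∀ s : ℝ, (2:ℝ) ^ ((1:ℝ)/4) ≤ s → s < Real.sqrt 2 →
      Disjoint (Icc ((tent s)^[2] (1/2)) ((tent s)^[4] (1/2)))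
               (Icc ((tent s)^[3] (1/2)) (tent s (1/2)))) ∧
    Filter.Tendsto
      (fun s : ℝ => hausdorffDist
        (Icc ((tent s)^[2] (1/2)) ((tent s)^[4] (1/2)) ∪
         Icc ((tent s)^[3] (1/2)) (tent s (1/2)))
        (Icc (Real.sqrt 2 * (1 - Real.sqrt 2 / 2)) (Real.sqrt 2 / 2)))
      (nhdsWithin (Real.sqrt 2) (Ico ((2:ℝ) ^ ((1:ℝ)/4)) (Real.sqrt 2)))
      (nhds 0) := by
  obtain ⟨ht2, ht1, ht32⟩ := sqrt_two_facts
  have hc1 : (1:ℝ) < (2:ℝ) ^ ((1:ℝ)/4) := by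
    rw [show (1:ℝ) = (2:ℝ) ^ (0:ℝ) by norm_num]
    exact Real.rpow_lt_rpow_left_iff (by norm_num) |>.mpr (by norm_num)
  constructor
  · intro s hs1 hs2
    have h1 : 1 < s := lt_of_lt_of_le hc1 hs1
    have hss : s * s < 2 := ht2 ▸ mul_self_lt_mul_self (by linarith) hs2
    obtain ⟨e1, e2, e3, e4⟩ := tent_iters s h1 hss
    rw [e1, e2, e3, e4, Set.disjoint_left]
    intro x hx hx'
    have hb1 : x ≤ s - s^3 + s^4/2 := hx.2
    have ha2 : s^2 - s^3/2 ≤ x := hx'.1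
    exact absurd (hb1.trans_lt (poly_b1_lt_a2 s h1 hss)) (not_lt.mpr ha2)
  · have hA : Real.sqrt 2 * (1 - Real.sqrt 2 / 2) = Real.sqrt 2 - 1 := by
      linear_combination (-(1:ℝ)/2) * ht2
    rw [hA]
    have hg : Filter.Tendsto (fun s : ℝ => 2 * (Real.sqrt 2 - s))
        (nhdsWithin (Real.sqrt 2) (Ico ((2:ℝ) ^ ((1:ℝ)/4)) (Real.sqrt 2))) (nhds 0) := by
      have : Filter.Tendsto (fun s : ℝ => 2 * (Real.sqrt 2 - s)) (nhds (Real.sqrt 2))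
          (nhds (2 * (Real.sqrt 2 - Real.sqrt 2))) :=
        (Filter.Tendsto.const_mul 2 ((tendsto_const_nhds).sub Filter.tendsto_id))
      simpa using this.mono_left nhdsWithin_le_nhds
    apply squeeze_zero'
    · filter_upwards [self_mem_nhdsWithin] with s _ using hausdorffDist_nonneg
    · filter_upwards [self_mem_nhdsWithin] with s hs using
        tent_hd_key s (lt_of_lt_of_le hc1 hs.1) hs.2
    · exact hg
end

section
/- The tent map T_s with 1 < s ≤ 2 maps the interval I₀(s) = [s(1 − s/2), s/2] into itself whenever √2 ≤ s ≤ 2, and for every x ∈ (0,1) there exists n ≥ 0 such that T_sⁿ(x) ∈ I₀(s) (for √2 ≤ s ≤ 2). -/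
theorem tent_I0_invariant_and_absorbing (s : ℝ)
    (hs1 : Real.sqrt 2 ≤ s) (hs2 : s ≤ 2) :
    (tent s '' Set.Icc (s * (1 - s/2)) (s/2) ⊆ Set.Icc (s * (1 - s/2)) (s/2)) ∧
    ∀ x ∈ Set.Ioo (0:ℝ) 1, ∃ n : ℕ, (tent s)^[n] x ∈ Set.Icc (s * (1 - s/2)) (s/2) := by
  have h2 : Real.sqrt 2 ^ 2 = 2 := Real.sq_sqrt (by norm_num)
  have hs0 : (0:ℝ) ≤ Real.sqrt 2 := Real.sqrt_nonneg 2
  have hs1' : (1:ℝ) < s := by nlinarith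
  set low := s * (1 - s/2) with hlow
  have hlow0 : 0 ≤ low := by nlinarith
  have hlowhalf : low ≤ 1/2 := by nlinarith
  have hhalf : (1:ℝ)/2 ≤ s/2 := by nlinarith
  constructor
  · rintro y ⟨x, ⟨hx1, hx2⟩, rfl⟩
    unfold tent
    split_ifs with h
    · exact ⟨by nlinarith, by nlinarith⟩
    · push_neg at h
      exact ⟨by nlinarith, by nlinarith⟩
  · have key : ∀ x : ℝ, 0 < x → x < low → ∃ n, (tent s)^[n] x ∈ Set.Icc low (s/2) := by
      intro x hx0 hxlow
      have main : ∀ n : ℕ, (∃ k, (tent s)^[k] x ∈ Set.Icc low (s/2)) ∨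
          ((tent s)^[n] x = s ^ n * x ∧ s ^ n * x < low) := by
        intro n
        induction n with
        | zero => right; simpa using hxlow
        | succ n ih =>
          rcases ih with h | ⟨heq, hlt⟩
          · left; exact h
          · have hy0 : 0 < s ^ n * x := by positivity
            have hstep : (tent s)^[n+1] x = s * (s ^ n * x) := by
              rw [Function.iterate_succ_apply', heq, tent, if_pos (by linarith)]
            by_cases hc : low ≤ s * (s ^ n * x)
            · exact Or.inl ⟨n+1, by rw [hstep]; exact ⟨hc, by nlinarith⟩⟩
            · push_neg at hc
              have hr : s ^ (n+1) * x = s * (s ^ n * x) := by ring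
              exact Or.inr ⟨by rw [hstep]; ring, by linarith⟩
      obtain ⟨N, hN⟩ := pow_unbounded_of_one_lt (low / x) hs1'
      rcases main N with ⟨k, hk⟩ | ⟨_, hlt⟩
      · exact ⟨k, hk⟩
      · exfalso
        rw [div_lt_iff₀ hx0] at hN
        nlinarith
    rintro x ⟨hx0, hx1⟩
    by_cases hA : x < low
    · exact key x hx0 hA
    · push_neg at hA
      by_cases hB : x ≤ s/2
      · exact ⟨0, by simpa using ⟨hA, hB⟩⟩
      · push_neg at hB
        have hxh : ¬ x ≤ 1/2 := by push_neg; linarith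
        have ht : tent s x = s * (1 - x) := by rw [tent, if_neg hxh]
        have h1 : 0 < tent s x := by rw [ht]; nlinarith
        have h2' : tent s x < low := by rw [ht]; nlinarith
        obtain ⟨n, hn⟩ := key _ h1 h2'
        exact ⟨n+1, by rwa [Function.iterate_succ_apply]⟩
end

section
/- The tent map T_s with √2 < s ≤ 2 restricted to I₀(s) = [s(1−s/2), s/2] is topologically transitive, i.e., there exists a point in I₀(s) whose forward orbit is dense in I₀(s). -/
open Set Function

def EventuallyCovers {α : Type*} (f : α → α) (J K : Set α) : Prop :=
  ∃ n, K ⊆ f^[n] '' J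

theorem EventuallyCovers.of_subset_image {α : Type*} {f : α → α} {J K : Set α}
    (h : K ⊆ f '' J) : EventuallyCovers f J K :=
  ⟨1, by rwa [iterate_one]⟩

theorem EventuallyCovers.trans {α : Type*} {f : α → α} {J K L : Set α}
    (hJK : EventuallyCovers f J K) (hKL : EventuallyCovers f K L) : EventuallyCovers f J L := by
  obtain ⟨m, hm⟩ := hJK
  obtain ⟨n, hn⟩ := hKL
  exact ⟨n + m, by rw [iterate_add, image_comp]; exact hn.trans (image_mono hm)⟩

theorem eventuallyCovers_Icc_of_expanding {f : ℝ → ℝ} {a b l : ℝ} (hl : 1 < l)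
    (hexp : ∀ c d, a ≤ c → c < d → d ≤ b →
      EventuallyCovers f (Icc c d) (Icc a b) ∨
        ∃ c' d', a ≤ c' ∧ c' < d' ∧ d' ≤ b ∧ l * (d - c) ≤ d' - c' ∧
          EventuallyCovers f (Icc c d) (Icc c' d'))
    {c d : ℝ} (hac : a ≤ c) (hcd : c < d) (hdb : d ≤ b) :
    EventuallyCovers f (Icc c d) (Icc a b) := by
  suffices h : ∀ m : ℕ, ∀ c d, a ≤ c → c < d → d ≤ b → b - a < l ^ m * (d - c) →
      EventuallyCovers f (Icc c d) (Icc a b) by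
    obtain ⟨m, hm⟩ := pow_unbounded_of_one_lt ((b - a) / (d - c)) hl
    exact h m c d hac hcd hdb (by rwa [div_lt_iff₀ (sub_pos.2 hcd)] at hm)
  intro m
  induction m with
  | zero => intro c d hac _ hdb hlen; simp only [pow_zero, one_mul] at hlen; linarith
  | succ m ih =>
    intro c d hac hcd hdb hlen
    rcases hexp c d hac hcd hdb with hcov | ⟨c', d', hac', hcd', hdb', hgrow, hcov⟩
    · exact hcov
    · refine hcov.trans (ih c' d' hac' hcd' hdb' ?_)
      calc b - a < l ^ (m + 1) * (d - c) := hlen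
        _ = l ^ m * (l * (d - c)) := by ring
        _ ≤ l ^ m * (d' - c') := by gcongr

theorem exists_Icc_subset_of_isOpen {U : Set ℝ} {a b : ℝ} (hab : a < b) (hU : IsOpen U)
    (hne : (U ∩ Icc a b).Nonempty) : ∃ c d, a ≤ c ∧ c < d ∧ d ≤ b ∧ Icc c d ⊆ U := by
  obtain ⟨z, hzU, hza, hzb⟩ := hne
  obtain ⟨ε, hε, hball⟩ := Metric.isOpen_iff.1 hU z hzU
  refine ⟨max a (z - ε / 2), min b (z + ε / 2), le_max_left _ _, ?_, min_le_left _ _, ?_⟩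
  · exact max_lt (lt_min hab (by linarith)) (lt_min (by linarith) (by linarith))
  · rintro y ⟨hy₁, hy₂⟩
    apply hball
    rw [Metric.mem_ball, Real.dist_eq, abs_lt]
    constructor <;> linarith [le_max_right a (z - ε / 2), min_le_right b (z + ε / 2)]

/-- Topological transitivity gives a dense orbit on a second countable Baire space: the points
whose orbit meets a given basic open set form a dense open set, and these countably many
dense open sets have a common point. -/
theorem exists_dense_orbit_of_transitive {X : Type*} [TopologicalSpace X] [BaireSpace X]
    [SecondCountableTopology X] [Nonempty X] {f : X → X} (hf : Continuous f)
    (htrans : ∀ U V : Set X, IsOpen U → U.Nonempty → IsOpen V → V.Nonempty →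
      ∃ n, (f^[n] '' U ∩ V).Nonempty) :
    ∃ x, Dense (range fun n => f^[n] x) := by
  obtain ⟨B, hBc, hB_empty, hB⟩ := TopologicalSpace.exists_countable_basis X
  have hopen : ∀ V ∈ B, IsOpen (⋃ n, f^[n] ⁻¹' V) := fun V hV =>
    isOpen_iUnion fun n => (hB.isOpen hV).preimage (hf.iterate n)
  have hdense : ∀ V ∈ B, Dense (⋃ n, f^[n] ⁻¹' V) := by
    intro V hV
    refine dense_iff_inter_open.2 fun U hU hUne => ?_
    have hVne : V.Nonempty := nonempty_iff_ne_empty.2 (ne_of_mem_of_not_mem hV hB_empty)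
    obtain ⟨n, hn⟩ := htrans U V hU hUne (hB.isOpen hV) hVne
    obtain ⟨x, hxU, hxV⟩ := image_inter_nonempty_iff.1 hn
    exact ⟨x, hxU, mem_iUnion.2 ⟨n, hxV⟩⟩
  obtain ⟨x, hx⟩ := (dense_biInter_of_isOpen hopen hBc hdense).nonempty
  refine ⟨x, hB.dense_iff.2 fun V hV _ => ?_⟩
  obtain ⟨n, hn⟩ := mem_iUnion.1 (mem_iInter₂.1 hx V hV)
  exact ⟨_, hn, n, rfl⟩

theorem exists_orbit_closure_superset_Icc {f : ℝ → ℝ} {a b : ℝ} (hab : a < b)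
    (hf : ContinuousOn f (Icc a b)) (hmaps : MapsTo f (Icc a b) (Icc a b))
    (hcov : ∀ c d, a ≤ c → c < d → d ≤ b → EventuallyCovers f (Icc c d) (Icc a b)) :
    ∃ x ∈ Icc a b, Icc a b ⊆ closure {y | ∃ n : ℕ, f^[n] x = y} := by
  have : Nonempty (Icc a b) := ⟨⟨a, le_rfl, hab.le⟩⟩
  set F := hmaps.restrict f (Icc a b) (Icc a b)
  have hF : ∀ n x, (F^[n] x : ℝ) = f^[n] x := fun n x => by
    rw [hmaps.iterate_restrict]; rfl
  have htrans : ∀ U V : Set (Icc a b), IsOpen U → U.Nonempty → IsOpen V → V.Nonempty →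
      ∃ n, (F^[n] '' U ∩ V).Nonempty := by
    rintro U V hU ⟨u, hu⟩ - ⟨v, hv⟩
    obtain ⟨U', hU', rfl⟩ := isOpen_induced_iff.1 hU
    obtain ⟨c, d, hac, hcd, hdb, hcdU⟩ := exists_Icc_subset_of_isOpen hab hU' ⟨u, hu, u.2⟩
    obtain ⟨n, hn⟩ := hcov c d hac hcd hdb
    obtain ⟨w, hw, hwv⟩ := hn v.2
    have hwI : w ∈ Icc a b := ⟨hac.trans hw.1, hw.2.trans hdb⟩
    refine ⟨n, F^[n] ⟨w, hwI⟩, ⟨⟨w, hwI⟩, hcdU hw, rfl⟩, ?_⟩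
    rwa [show F^[n] ⟨w, hwI⟩ = v from Subtype.ext ((hF n _).trans hwv)]
  obtain ⟨x, hx⟩ := exists_dense_orbit_of_transitive (hf.mapsToRestrict hmaps) htrans
  refine ⟨x, x.2, fun y hy => closure_mono ?_ (closure_subtype.1 (hx ⟨y, hy⟩))⟩
  rintro _ ⟨_, ⟨n, rfl⟩, rfl⟩
  exact ⟨n, (hF n x).symm⟩

theorem tent_of_le {s x : ℝ} (h : x ≤ 1/2) : tent s x = s * x := if_pos h

theorem tent_of_ge {s x : ℝ} (h : 1/2 ≤ x) : tent s x = s * (1 - x) := by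
  rcases h.eq_or_lt with rfl | h
  · norm_num [tent]
  · exact if_neg (not_le.2 h)

theorem continuous_tent (s : ℝ) : Continuous (tent s) := by
  have : tent s = fun x => s * min x (1 - x) := by
    funext x
    rcases le_total x (1/2) with h | h
    · rw [tent_of_le h, min_eq_left (by linarith)]
    · rw [tent_of_ge h, min_eq_right (by linarith)]
  rw [this]
  fun_prop

theorem tent_half (s : ℝ) : tent s (1/2) = s/2 := by rw [tent_of_le le_rfl]; ring

theorem mapsTo_tent_Icc {s : ℝ} (hs1 : 1 ≤ s) (hs2 : s ≤ 2) :
    MapsTo (tent s) (Icc (s * (1 - s/2)) (s/2)) (Icc (s * (1 - s/2)) (s/2)) := by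
  rintro x ⟨hx1, hx2⟩
  rcases le_total x (1/2) with h | h
  · rw [tent_of_le h]; constructor <;> nlinarith
  · rw [tent_of_ge h]; constructor <;> nlinarith

theorem exists_Icc_subset_tent_image_of_half_mem {s c d : ℝ} (hs1 : 1 ≤ s) (hs2 : s ≤ 2)
    (hac : s * (1 - s/2) ≤ c) (hdb : d ≤ s/2) (hc : c ≤ 1/2) (hd : 1/2 ≤ d) :
    ∃ e, s * (1 - s/2) ≤ e ∧ s/2 * (d - c) ≤ s/2 - e ∧ Icc e (s/2) ⊆ tent s '' Icc c d := by
  rcases le_total (1/2 - c) (d - 1/2) with hlong | hlong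
  · refine ⟨tent s d, ?_, ?_, ?_⟩
    · rw [tent_of_ge hd]; nlinarith
    · rw [tent_of_ge hd]; nlinarith
    · rw [← tent_half]
      exact (intermediate_value_Icc' hd (continuous_tent s).continuousOn).trans
        (image_mono (Icc_subset_Icc_left hc))
  · refine ⟨tent s c, ?_, ?_, ?_⟩
    · rw [tent_of_le hc]; nlinarith
    · rw [tent_of_le hc]; nlinarith
    · rw [← tent_half]
      exact (intermediate_value_Icc hc (continuous_tent s).continuousOn).trans
        (image_mono (Icc_subset_Icc_right hd))

theorem tent_expands {s c d : ℝ} (hs1 : 1 ≤ s) (hs2 : s ≤ 2)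
    (hac : s * (1 - s/2) ≤ c) (hcd : c < d) (hdb : d ≤ s/2) :
    EventuallyCovers (tent s) (Icc c d) (Icc (s * (1 - s/2)) (s/2)) ∨
      ∃ c' d', s * (1 - s/2) ≤ c' ∧ c' < d' ∧ d' ≤ s/2 ∧ s^2/2 * (d - c) ≤ d' - c' ∧
        EventuallyCovers (tent s) (Icc c d) (Icc c' d') := by
  have hb : 1/2 ≤ s/2 := by linarith
  have htent_b : tent s (s/2) = s * (1 - s/2) := tent_of_ge hb
  have hstretch : s^2/2 * (d - c) ≤ s * (d - c) := by
    have h := mul_nonneg (mul_nonneg (sub_nonneg.2 hs2) (by linarith : (0:ℝ) ≤ s))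
      (sub_nonneg.2 hcd.le)
    nlinarith
  rcases le_total d (1/2) with hd | hd
  · right
    refine ⟨tent s c, tent s d, ?_, ?_, ?_, ?_,
      .of_subset_image (intermediate_value_Icc hcd.le (continuous_tent s).continuousOn)⟩ <;>
      simp only [tent_of_le hd, tent_of_le (hcd.le.trans hd)] <;> nlinarith
  rcases le_total (1/2) c with hc | hc
  · right
    refine ⟨tent s d, tent s c, ?_, ?_, ?_, ?_,
      .of_subset_image (intermediate_value_Icc' hcd.le (continuous_tent s).continuousOn)⟩ <;>
      simp only [tent_of_ge hc, tent_of_ge (hc.trans hcd.le)] <;> nlinarith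
  obtain ⟨e, hae, hgrow, hsub⟩ := exists_Icc_subset_tent_image_of_half_mem hs1 hs2 hac hdb hc hd
  have hcd_e : EventuallyCovers (tent s) (Icc c d) (Icc e (s/2)) := .of_subset_image hsub
  rcases le_total e (1/2) with he | he
  · left
    refine hcd_e.trans (.of_subset_image ?_)
    have h := intermediate_value_Icc' hb (continuous_tent s).continuousOn
    rw [htent_b, tent_half] at h
    exact h.trans (image_mono (Icc_subset_Icc_left he))
  · right
    refine ⟨s * (1 - s/2), tent s e, le_rfl, ?_, ?_, ?_, hcd_e.trans (.of_subset_image ?_)⟩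
    · rw [tent_of_ge he]; nlinarith
    · rw [tent_of_ge he]; nlinarith
    · rw [tent_of_ge he]; nlinarith
    · rw [← htent_b]
      exact intermediate_value_Icc' (show e ≤ s/2 by nlinarith) (continuous_tent s).continuousOn

theorem tent_transitive_on_I0 (s : ℝ) (hs1 : Real.sqrt 2 < s) (hs2 : s ≤ 2) :
    ∃ x ∈ Set.Icc (s * (1 - s/2)) (s/2),
      Set.Icc (s * (1 - s/2)) (s/2) ⊆
        closure {y : ℝ | ∃ n : ℕ, (tent s)^[n] x = y} := by
  have hs_sq : 2 < s^2 := by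
    nlinarith [Real.sq_sqrt (show (0:ℝ) ≤ 2 by norm_num), Real.sqrt_nonneg 2]
  have hs_one : 1 ≤ s := by nlinarith [Real.sqrt_nonneg 2]
  have hab : s * (1 - s/2) < s/2 := by nlinarith
  exact exists_orbit_closure_superset_Icc hab (continuous_tent s).continuousOn
    (mapsTo_tent_Icc hs_one hs2) fun _ _ hac hcd hdb =>
      eventuallyCovers_Icc_of_expanding (by linarith : (1:ℝ) < s^2/2)
        (fun _ _ => tent_expands hs_one hs2) hac hcd hdb
end
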